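/- arXiv:1106.6318 — 5 statements merged into one kernel-verified Lean document; each statement's English description precedes it below -/
import Mathlib

section
/- Let 𝐒 and 𝐒_{-1} be bounded on 𝐄. If 0 < |z| < 1/ρ(𝐒_{-1}) then z belongs to the spectrum of 𝐒. (Proof via the identity 𝐒_{-1} - (1/z)I = -(1/z)(𝐒_{-1}(𝐒 - zI)): if z ∉ σ(𝐒) there is g ≠ 0 with (𝐒 - z)g = e_0, whence (𝐒_{-1} - 1/z)g = 0, contradicting 1/|z| > ρ(𝐒_{-1}).) -/
open scoped ENNReal

/-- If `𝐒` and `𝐒₋₁` are bounded on `𝐄` (with `𝐒₋₁𝐒 = I` and `𝐒₋₁e₀ = 0`, `e₀ ≠ 0`),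
and `0 < |z| < 1/ρ(𝐒₋₁)`, then `z` belongs to the spectrum of `𝐒`. -/
theorem mem_spectrum_of_small {E : Type*} [NormedAddCommGroup E] [NormedSpace ℂ E]
    [CompleteSpace E] (S Sm : E →L[ℂ] E) (hid : ∀ x : E, Sm (S x) = x)
    (e0 : E) (he0 : e0 ≠ 0) (hSme0 : Sm e0 = 0)
    (z : ℂ) (hz0 : 0 < ‖z‖)
    (hz1 : (‖z‖₊ : ℝ≥0∞) < (spectralRadius ℂ Sm)⁻¹) :
    z ∈ spectrum ℂ S := by
  have hzne : z ≠ 0 := by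
    intro h; simp [h] at hz0
  by_contra hmem
  rw [spectrum.notMem_iff] at hmem
  -- g := (z - S)⁻¹ e0
  set T : E →L[ℂ] E := algebraMap ℂ (E →L[ℂ] E) z - S with hT
  set g : E := hmem.unit.inv e0 with hg
  have hTg : T g = e0 := by
    have h : (↑hmem.unit * hmem.unit.inv : E →L[ℂ] E) e0 = e0 := by
      rw [hmem.unit.val_inv, ContinuousLinearMap.one_apply]
    rwa [ContinuousLinearMap.mul_apply, hmem.unit_spec] at h
  have hgne : g ≠ 0 := by
    intro h
    apply he0
    rw [← hTg, h, map_zero]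
  -- Sm g = z⁻¹ • g
  have hSmg : Sm g = z⁻¹ • g := by
    have h1 : Sm (T g) = 0 := by rw [hTg, hSme0]
    have h2 : Sm (T g) = z • Sm g - g := by
      simp [hT, Module.algebraMap_end_apply, map_sub, hid, Algebra.algebraMap_eq_smul_one]
    rw [h2] at h1
    have : z • Sm g = g := by linear_combination (norm := module) h1
    have := congrArg (fun x => z⁻¹ • x) this
    simpa [smul_smul, inv_mul_cancel₀ hzne] using this
  -- z⁻¹ is an eigenvalue of Sm, hence z⁻¹ ∈ spectrum Sm
  have hlt : spectralRadius ℂ Sm < (‖z⁻¹‖₊ : ℝ≥0∞) := by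
    rw [nnnorm_inv, ENNReal.coe_inv (by simpa using hzne)]
    exact ENNReal.lt_inv_iff_lt_inv.mp hz1
  have hres := spectrum.mem_resolventSet_of_spectralRadius_lt hlt
  rw [resolventSet, Set.mem_setOf_eq] at hres
  have hker : (algebraMap ℂ (E →L[ℂ] E) z⁻¹ - Sm) g = 0 := by
    simp [Module.algebraMap_end_apply, hSmg, Algebra.algebraMap_eq_smul_one]
  apply hgne
  have : (hres.unit.inv * hres.unit.val) g = hres.unit.inv 0 := by
    rw [show hres.unit.val = algebraMap ℂ (E →L[ℂ] E) z⁻¹ - Sm from rfl]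
    simp only [ContinuousLinearMap.mul_apply]
    rw [hker]
  rwa [hres.unit.inv_val, ContinuousLinearMap.one_apply, map_zero] at this
end

section
/- Let 𝐒 and 𝐒_{-1} be bounded on 𝐄, and suppose the annulus {1/ρ(𝐒_{-1}) ≤ |z| ≤ ρ(𝐒)} is contained in σ(𝐒). Then σ(𝐒) = { z ∈ ℂ : |z| ≤ ρ(𝐒) }, i.e. the spectrum of 𝐒 is the full closed disk of radius ρ(𝐒). -/
open scoped ENNReal

lemma nnnorm_le_specRad {A : Type*} [NormedRing A] [NormedAlgebra ℂ A] {a : A} {z : ℂ}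
    (hz : z ∈ spectrum ℂ a) : (‖z‖₊ : ℝ≥0∞) ≤ spectralRadius ℂ a :=
  le_iSup₂ (f := fun k (_ : k ∈ spectrum ℂ a) => (‖k‖₊ : ℝ≥0∞)) z hz

lemma mem_spectrum_of_eigen {E : Type*} [NormedAddCommGroup E] [NormedSpace ℂ E]
    (A : E →L[ℂ] E) (μ : ℂ) (g : E) (hg : g ≠ 0) (h : A g = μ • g) :
    μ ∈ spectrum ℂ A := by
  rw [spectrum.mem_iff]
  intro hU
  set U : E →L[ℂ] E := algebraMap ℂ (E →L[ℂ] E) μ - A with hUdef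
  have hUg : U g = 0 := by
    simp [hUdef, Algebra.algebraMap_eq_smul_one, ContinuousLinearMap.sub_apply,
      ContinuousLinearMap.smul_apply, h]
  have h1 : ((↑hU.unit⁻¹ : E →L[ℂ] E) * U) = 1 := by
    have := hU.unit.inv_mul
    rwa [hU.unit_spec] at this
  have := congrArg (fun B : E →L[ℂ] E => B g) h1
  simp only [ContinuousLinearMap.mul_apply, ContinuousLinearMap.one_apply, hUg, map_zero] at this
  exact hg this.symm

/-- If `𝐒` and `𝐒₋₁` are bounded on `𝐄` (with `𝐒₋₁𝐒 = I`, `𝐒₋₁e₀ = 0`, `e₀ ≠ 0`) and the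
annulus `{1/ρ(𝐒₋₁) ≤ |z| ≤ ρ(𝐒)}` is contained in `σ(𝐒)`, then `σ(𝐒)` is the full closed
disk of radius `ρ(𝐒)`. -/
theorem spectrum_shift_eq_disk {E : Type*} [NormedAddCommGroup E] [NormedSpace ℂ E]
    [CompleteSpace E] (S Sm : E →L[ℂ] E) (hid : ∀ x : E, Sm (S x) = x)
    (e0 : E) (he0 : e0 ≠ 0) (hSme0 : Sm e0 = 0)
    (hann : {z : ℂ | (spectralRadius ℂ Sm)⁻¹ ≤ (‖z‖₊ : ℝ≥0∞) ∧
        (‖z‖₊ : ℝ≥0∞) ≤ spectralRadius ℂ S} ⊆ spectrum ℂ S) :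
    spectrum ℂ S = {z : ℂ | (‖z‖₊ : ℝ≥0∞) ≤ spectralRadius ℂ S} := by
  apply Set.Subset.antisymm
  · intro z hz
    exact nnnorm_le_specRad hz
  · intro z hz
    by_cases hcase : (spectralRadius ℂ Sm)⁻¹ ≤ (‖z‖₊ : ℝ≥0∞)
    · exact hann ⟨hcase, hz⟩
    push_neg at hcase
    by_contra hzS
    have hU : IsUnit (algebraMap ℂ (E →L[ℂ] E) z - S) := by
      rw [spectrum.mem_iff, not_not] at hzS
      exact hzS
    set T : E →L[ℂ] E := algebraMap ℂ (E →L[ℂ] E) z - S with hTdef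
    set g : E := (↑hU.unit⁻¹ : E →L[ℂ] E) e0 with hgdef
    have h1 : (T * (↑hU.unit⁻¹ : E →L[ℂ] E)) = 1 := by
      have := hU.unit.mul_inv
      rwa [hU.unit_spec] at this
    have hTg : T g = e0 := by
      have h2 := congrArg (fun B : E →L[ℂ] E => B e0) h1
      simp only [ContinuousLinearMap.mul_apply, ContinuousLinearMap.one_apply] at h2
      exact h2
    have hexp : z • g - S g = e0 := by
      simpa [hTdef, Algebra.algebraMap_eq_smul_one, ContinuousLinearMap.sub_apply,
        ContinuousLinearMap.smul_apply] using hTg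
    have hkey : z • Sm g = g := by
      have h2 : Sm (z • g - S g) = Sm e0 := congrArg Sm hexp
      rwa [map_sub, map_smul, hid, hSme0, sub_eq_zero] at h2
    have hgne : g ≠ 0 := by
      intro h0
      rw [h0, map_zero] at hTg
      exact he0 hTg.symm
    rcases eq_or_ne z 0 with hz0 | hz0
    · rw [hz0, zero_smul] at hkey
      exact hgne hkey.symm
    · have heig : Sm g = z⁻¹ • g := by
        rw [eq_inv_smul_iff₀ hz0]
        exact hkey
      have hmem := mem_spectrum_of_eigen Sm z⁻¹ g hgne heig
      have hle := nnnorm_le_specRad hmem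
      rw [nnnorm_inv, ENNReal.coe_inv (nnnorm_ne_zero_iff.mpr hz0),
        ENNReal.inv_le_iff_inv_le] at hle
      exact absurd hle (not_le_of_gt hcase)
end

section
/- Let M be a bounded multiplier on E and suppose α ∈ σ(M) with α = γ(M) for a character γ on the closed algebra 𝔖 generated by convolution operators M_φ, φ ∈ F(ℤ), and suppose M = lim M_{φ_n} in operator norm with φ_n ∈ F(ℤ). Then the symbols M̃_{φ_n} converge uniformly on U_E to a function μ_M, and γ(M) = μ_M(γ(S)); consequently σ(M) ⊂ closure of μ_M(σ(S)). -/
/-!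
On the annulus `U_E` every symbol is dominated by the norm of its multiplier, so the symbols of
the `φ n` are uniformly Cauchy on `U_E` and converge uniformly to some `μ`; moreover `σ(S) ⊆ U_E`.
A character `χ` of the Laurent polynomials is evaluation of the symbol at `χ(T)`; applied to
`γ ∘ Mop` and passed to the limit this gives `γ(M) = μ(γ(S))`.

For the spectral inclusion, clearing negative powers and using the spectral mapping theorem for
polynomials gives `σ(M_{φ n}) ⊆ φ̃ n '' σ(S)`. Since `M_{φ n}` commutes with `M`, each point `l` of
`σ(M)` lies within `‖M - M_{φ n}‖` of `σ(M_{φ n})`: otherwise `(l - M_{φ n})⁻¹ (M - M_{φ n})` has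
spectral radius `< 1` by Gelfand's formula, and `l - M = (l - M_{φ n}) (1 - that)` is invertible.
-/

open scoped ENNReal
open Filter

namespace LaurentPolynomial

section AevalUnit

variable {R A : Type*} [CommSemiring R] [Semiring A] [Algebra R A]

noncomputable def aevalUnit (u : Aˣ) : R[T;T⁻¹] →ₐ[R] A :=
  AddMonoidAlgebra.lift R A ℤ ((Units.coeHom A).comp (zpowersHom Aˣ u))

theorem aevalUnit_T (u : Aˣ) (n : ℤ) : aevalUnit (R := R) u (T n) = ↑(u ^ n) := by
  rw [aevalUnit, T, AddMonoidAlgebra.lift_single, one_smul]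
  rfl

theorem aevalUnit_apply (u : Aˣ) (f : R[T;T⁻¹]) : aevalUnit u f = f.smeval u := by
  simp [aevalUnit, AddMonoidAlgebra.lift_apply, smeval_eq_sum]

theorem eq_aevalUnit (Φ : R[T;T⁻¹] →ₐ[R] A) {u : Aˣ} (hu : Φ (T 1) = u) : Φ = aevalUnit u :=
  (AddMonoidAlgebra.lift R A ℤ).symm_apply_eq.mp <| MonoidHom.ext_mint <| by
    rw [AddMonoidAlgebra.lift_symm_apply]; exact hu.trans (by simp)

theorem algHom_toLaurent (Φ : R[T;T⁻¹] →ₐ[R] A) (p : Polynomial R) :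
    Φ (Polynomial.toLaurent p) = Polynomial.aeval (Φ (T 1)) p := by
  have : Φ.comp Polynomial.toLaurentAlg = Polynomial.aeval (Φ (T 1)) :=
    Polynomial.algHom_ext (by simp [Polynomial.toLaurent_X])
  exact congr($this p)

end AevalUnit

theorem algHom_apply_eq_sum {K : Type*} [Field K] (χ : K[T;T⁻¹] →ₐ[K] K) (f : K[T;T⁻¹]) :
    χ f = f.coeff.sum fun m c => c * χ (T 1) ^ m := by
  have hu : IsUnit (χ (T 1)) := (isUnit_T 1).map χ
  rw [eq_aevalUnit χ hu.unit_spec.symm, aevalUnit_apply, smeval_eq_sum, aevalUnit_T, zpow_one]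
  simp [Units.val_zpow_eq_zpow_val]

section Spectrum

variable {𝕜 A : Type*} [Field 𝕜] [IsAlgClosed 𝕜] [Ring A] [Algebra 𝕜 A]

theorem exists_algHom_eq_zero_of_not_isUnit (Φ : 𝕜[T;T⁻¹] →ₐ[𝕜] A)
    (hne : (spectrum 𝕜 (Φ (T 1))).Nonempty) {g : 𝕜[T;T⁻¹]} (hg : ¬IsUnit (Φ g)) :
    ∃ χ : 𝕜[T;T⁻¹] →ₐ[𝕜] 𝕜, χ (T 1) ∈ spectrum 𝕜 (Φ (T 1)) ∧ χ g = 0 := by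
  obtain ⟨n, p, hp⟩ := exists_T_pow g
  have hp_not_isUnit : ¬IsUnit (Polynomial.aeval (Φ (T 1)) p) := by
    rw [← algHom_toLaurent, hp, map_mul]
    have hTn : IsUnit (Φ (T n)) := (isUnit_T _).map Φ
    exact fun h => hg (hTn.mul_right_iff.mp h)
  obtain ⟨w, hw, hpw⟩ : (0 : 𝕜) ∈ (Polynomial.eval · p) '' spectrum 𝕜 (Φ (T 1)) := by
    rw [← spectrum.map_polynomial_aeval_of_nonempty _ _ hne]
    exact (spectrum.zero_mem_iff 𝕜).mpr hp_not_isUnit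
  have hw0 : w ≠ 0 := by
    rintro rfl
    exact (spectrum.zero_mem_iff 𝕜).mp hw ((isUnit_T 1).map Φ)
  set χ : 𝕜[T;T⁻¹] →ₐ[𝕜] 𝕜 := aevalUnit (Units.mk0 w hw0)
  have hχT : χ (T 1) = w := by simp [χ, aevalUnit_T]
  refine ⟨χ, hχT ▸ hw, ?_⟩
  have : χ g * χ (T n) = 0 := by
    rw [← map_mul, ← hp, algHom_toLaurent, hχT, Polynomial.coe_aeval_eq_eval]
    exact hpw
  have hχTn : IsUnit (χ (T n)) := (isUnit_T _).map χ
  exact hχTn.mul_left_eq_zero.mp this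

theorem spectrum_algHom_subset (Φ : 𝕜[T;T⁻¹] →ₐ[𝕜] A)
    (hne : (spectrum 𝕜 (Φ (T 1))).Nonempty) (f : 𝕜[T;T⁻¹]) :
    spectrum 𝕜 (Φ f) ⊆ (fun w => f.coeff.sum fun m c => c * w ^ m) '' spectrum 𝕜 (Φ (T 1)) := by
  intro l hl
  have hl' : ¬IsUnit (Φ (algebraMap 𝕜 _ l - f)) := by
    rwa [map_sub, AlgHom.commutes, ← spectrum.mem_iff]
  obtain ⟨χ, hχ, hχl⟩ := exists_algHom_eq_zero_of_not_isUnit Φ hne hl'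
  refine ⟨χ (T 1), hχ, ?_⟩
  rw [map_sub, AlgHom.commutes, sub_eq_zero] at hχl
  change f.coeff.sum (fun m c => c * χ (T 1) ^ m) = l
  rw [← algHom_apply_eq_sum, ← hχl, Algebra.algebraMap_self, RingHom.id_apply]

end Spectrum

end LaurentPolynomial

theorem UniformCauchySeqOn.of_dist_le {ι α β γ : Type*} [Nonempty ι] [SemilatticeSup ι]
    [PseudoMetricSpace β] [PseudoMetricSpace γ] {F : ι → α → β} {g : ι → γ} {s : Set α}
    (hg : CauchySeq g) (h : ∀ m n, ∀ x ∈ s, dist (F m x) (F n x) ≤ dist (g m) (g n)) :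
    UniformCauchySeqOn F atTop s := by
  rw [Metric.uniformCauchySeqOn_iff]
  intro ε hε
  obtain ⟨N, hN⟩ := Metric.cauchySeq_iff.mp hg ε hε
  exact ⟨N, fun m hm n hn x hx => (h m n x hx).trans_lt (hN m hm n hn)⟩

theorem UniformCauchySeqOn.tendstoUniformlyOn_limUnder {ι α β : Type*} [Nonempty ι]
    [SemilatticeSup ι] [UniformSpace β] [CompleteSpace β] [Nonempty β] {F : ι → α → β} {s : Set α}
    (hF : UniformCauchySeqOn F atTop s) :
    TendstoUniformlyOn F (fun x => limUnder atTop (F · x)) atTop s :=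
  hF.tendstoUniformlyOn_of_tendsto fun _ hx => (hF.cauchySeq hx).tendsto_limUnder

theorem AlgHom.commute_of_mem_topologicalClosure_range {R C A : Type*} [CommSemiring R]
    [CommSemiring C] [Algebra R C] [Semiring A] [Algebra R A] [TopologicalSpace A]
    [IsSemitopologicalSemiring A] [T2Space A] (Φ : C →ₐ[R] A) (x : C) {y : A}
    (hy : y ∈ Φ.range.topologicalClosure) : Commute (Φ x) y := by
  have hsub : (Φ.range : Set A) ⊆ Set.centralizer {Φ x} := by
    rintro _ ⟨x', rfl⟩ _ rfl
    exact ((Commute.all x x').map Φ).eq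
  exact closure_minimal hsub (Set.isClosed_centralizer _) hy _ rfl

namespace spectrum

open Metric

section NormedField

variable {𝕜 A : Type*} [NormedField 𝕜] [Ring A] [Algebra 𝕜 A]

theorem spectralRadius_resolvent_le {a : A} {l : 𝕜} (hl : l ∈ resolventSet 𝕜 a) :
    spectralRadius 𝕜 (resolvent a l) ≤ (ENNReal.ofReal (infDist l (spectrum 𝕜 a)))⁻¹ := by
  refine iSup₂_le fun z hz => ?_
  rcases eq_or_ne z 0 with rfl | hz0
  · simp
  have hu : IsUnit (algebraMap 𝕜 A l - a) := hl
  rw [resolvent, ← hu.unit_spec, Ring.inverse_unit, ← inv₀_mem_iff, hu.unit_spec,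
    ← singleton_sub_eq] at hz
  obtain ⟨l', hl', y, hy, hzy⟩ := hz
  rw [Set.mem_singleton_iff.mp hl'] at hzy
  have hD : infDist l (spectrum 𝕜 a) ≤ ‖z‖⁻¹ := by
    simpa [dist_eq_norm, hzy] using infDist_le_dist_of_mem (x := l) hy
  rw [ENNReal.le_inv_iff_le_inv, ← ENNReal.coe_inv (nnnorm_ne_zero_iff.mpr hz0)]
  exact ENNReal.ofReal_le_of_le_toReal (by simpa using hD)

theorem inv_spectralRadius_inv_le_nnnorm {u : Aˣ} {z : 𝕜} (hz : z ∈ spectrum 𝕜 (u : A)) :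
    (spectralRadius 𝕜 (↑u⁻¹ : A))⁻¹ ≤ ‖z‖₊ := by
  have hz0 : z ≠ 0 := fun h => (zero_mem_iff 𝕜).mp (h ▸ hz) u.isUnit
  rw [← inv_inv z, inv₀_mem_iff] at hz
  rw [ENNReal.inv_le_iff_inv_le, ← ENNReal.coe_inv (nnnorm_ne_zero_iff.mpr hz0), ← nnnorm_inv]
  exact le_iSup₂ (α := ℝ≥0∞) z⁻¹ hz

end NormedField

variable {A : Type*} [NormedRing A] [NormedAlgebra ℂ A] [CompleteSpace A]

theorem spectralRadius_mul_le_of_commute {a b : A} (hab : Commute a b) :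
    spectralRadius ℂ (a * b) ≤ spectralRadius ℂ a * ‖b‖₊ := by
  refine le_of_tendsto_of_tendsto (pow_nnnorm_pow_one_div_tendsto_nhds_spectralRadius (a * b))
    (ENNReal.Tendsto.mul_const (pow_nnnorm_pow_one_div_tendsto_nhds_spectralRadius a)
      (.inr ENNReal.coe_ne_top)) ?_
  filter_upwards [eventually_ge_atTop 1] with n hn
  have hpow : (‖(a * b) ^ n‖₊ : ℝ≥0∞) ≤ ‖a ^ n‖₊ * (‖b‖₊ : ℝ≥0∞) ^ n := by
    rw [hab.mul_pow]
    exact_mod_cast (nnnorm_mul_le _ _).trans (by gcongr; exact nnnorm_pow_le' b hn)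
  calc (‖(a * b) ^ n‖₊ : ℝ≥0∞) ^ (1 / n : ℝ)
      ≤ ((‖a ^ n‖₊ : ℝ≥0∞) * (‖b‖₊ : ℝ≥0∞) ^ n) ^ (1 / n : ℝ) := by gcongr
    _ = (‖a ^ n‖₊ : ℝ≥0∞) ^ (1 / n : ℝ) * ‖b‖₊ := by
      rw [ENNReal.mul_rpow_of_nonneg _ _ (by positivity), one_div,
        ENNReal.pow_rpow_inv_natCast (by omega)]

theorem infDist_le_norm_sub_of_commute {a b : A} (hab : Commute a b) {l : ℂ}
    (hl : l ∈ spectrum ℂ b) : infDist l (spectrum ℂ a) ≤ ‖b - a‖ := by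
  by_contra! hlt
  have hu : IsUnit (algebraMap ℂ A l - a) := notMem_iff.mp fun hl' => by
    rw [infDist_zero_of_mem hl'] at hlt
    exact (norm_nonneg _).not_gt hlt
  have hcomm : Commute (resolvent a l) (b - a) := by
    rw [resolvent, ← hu.unit_spec, Ring.inverse_unit]
    refine Commute.units_inv_left ?_
    rw [hu.unit_spec]
    exact ((Algebra.commute_algebraMap_left l b).sub_right (Algebra.commute_algebraMap_left l a))
      |>.sub_left ((hab.sub_right (Commute.refl a)))
  have hρ : spectralRadius ℂ (resolvent a l * (b - a)) < ‖(1 : ℂ)‖₊ := calc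
    _ ≤ spectralRadius ℂ (resolvent a l) * ‖b - a‖₊ := spectralRadius_mul_le_of_commute hcomm
    _ ≤ (ENNReal.ofReal (infDist l (spectrum ℂ a)))⁻¹ * ENNReal.ofReal ‖b - a‖ := by
      rw [← enorm_eq_nnnorm, ← ofReal_norm]
      gcongr
      exact spectralRadius_resolvent_le (mem_resolventSet_iff.mpr hu)
    _ < ‖(1 : ℂ)‖₊ := by
      have hD : 0 < infDist l (spectrum ℂ a) := (norm_nonneg _).trans_lt hlt
      rw [nnnorm_one, ENNReal.coe_one, ← ENNReal.div_eq_inv_mul,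
        ENNReal.div_lt_iff (.inl (ENNReal.ofReal_pos.mpr hD).ne') (.inl ENNReal.ofReal_ne_top),
        one_mul]
      exact (ENNReal.ofReal_lt_ofReal_iff hD).mpr hlt
  have hone : IsUnit (1 - resolvent a l * (b - a)) := by
    simpa [mem_resolventSet_iff] using mem_resolventSet_of_spectralRadius_lt hρ
  have hfactor : algebraMap ℂ A l - b = (algebraMap ℂ A l - a) * (1 - resolvent a l * (b - a)) := by
    rw [mul_sub, mul_one, ← mul_assoc, resolvent, Ring.mul_inverse_cancel _ hu, one_mul]
    abel
  exact mem_iff.mp hl (hfactor ▸ hu.mul hone)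

theorem subset_closure_image_of_tendsto {ι : Type*} {l : Filter ι} [l.NeBot] {a : A} {b : ι → A}
    (hb : Tendsto b l (nhds a)) (hcomm : ∀ i, Commute (b i) a) {K : Set ℂ} {g : ι → ℂ → ℂ}
    {μ : ℂ → ℂ} (hσ : ∀ i, spectrum ℂ (b i) ⊆ g i '' K) (hg : TendstoUniformlyOn g μ l K) :
    spectrum ℂ a ⊆ closure (μ '' K) := by
  intro z hz
  have : Nontrivial A := not_subsingleton_iff_nontrivial.mp fun _ => by
    simp [of_subsingleton] at hz
  rw [Metric.mem_closure_iff]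
  intro ε hε
  obtain ⟨i, hgi, hbi⟩ := ((tendstoUniformlyOn_iff.mp hg (ε / 2) (half_pos hε)).and
    (tendsto_nhds.mp hb (ε / 2) (half_pos hε))).exists
  have hdist : infDist z (spectrum ℂ (b i)) < ε / 2 := by
    refine (infDist_le_norm_sub_of_commute (hcomm i) hz).trans_lt ?_
    rwa [← dist_eq_norm, dist_comm]
  obtain ⟨_, hy, hzy⟩ := (infDist_lt_iff (spectrum.nonempty _)).mp hdist
  obtain ⟨x, hx, rfl⟩ := hσ i hy
  refine ⟨μ x, Set.mem_image_of_mem μ hx, ?_⟩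
  calc dist z (μ x) ≤ dist z (g i x) + dist (μ x) (g i x) := dist_triangle_right _ _ _
    _ < ε / 2 + ε / 2 := add_lt_add hzy (hgi x hx)
    _ = ε := add_halves ε

end spectrum

theorem spectrum_subset_closure_symbol_general {E : Type*} [NormedAddCommGroup E] [NormedSpace ℂ E]
    [CompleteSpace E]
    (Mop : AddMonoidAlgebra ℂ ℤ →ₐ[ℂ] (E →L[ℂ] E))
    (hbound : ∀ (ψ : AddMonoidAlgebra ℂ ℤ) (z : ℂ),
      (spectralRadius ℂ (Mop (AddMonoidAlgebra.single (-1 : ℤ) (1 : ℂ))))⁻¹ ≤ (‖z‖₊ : ℝ≥0∞) →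
      (‖z‖₊ : ℝ≥0∞) ≤ spectralRadius ℂ (Mop (AddMonoidAlgebra.single (1 : ℤ) (1 : ℂ))) →
      ‖ψ.coeff.sum fun n c => c * z ^ n‖ ≤ ‖Mop ψ‖)
    (M : E →L[ℂ] E) (φ : ℕ → AddMonoidAlgebra ℂ ℤ)
    (hconv : Tendsto (fun n => ‖Mop (φ n) - M‖) atTop (nhds 0))
    (hMmem : M ∈ Mop.range.topologicalClosure)
    (γ : WeakDual.characterSpace ℂ Mop.range.topologicalClosure)
    (α : ℂ) (hαγ : α = γ ⟨M, hMmem⟩) :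
    ∃ μ : ℂ → ℂ,
      TendstoUniformlyOn (fun n z => (φ n).coeff.sum fun m c => c * z ^ m) μ atTop
        {z : ℂ | (spectralRadius ℂ (Mop (AddMonoidAlgebra.single (-1 : ℤ) (1 : ℂ))))⁻¹
            ≤ (‖z‖₊ : ℝ≥0∞) ∧
          (‖z‖₊ : ℝ≥0∞) ≤ spectralRadius ℂ (Mop (AddMonoidAlgebra.single (1 : ℤ) (1 : ℂ)))} ∧
      α = μ (γ ⟨Mop (AddMonoidAlgebra.single (1 : ℤ) (1 : ℂ)),
        Mop.range.le_topologicalClosure (AlgHom.mem_range_self _ _)⟩) ∧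
      spectrum ℂ M ⊆
        closure (μ '' spectrum ℂ (Mop (AddMonoidAlgebra.single (1 : ℤ) (1 : ℂ)))) := by
  set U : Set ℂ := {z : ℂ | (spectralRadius ℂ (Mop (AddMonoidAlgebra.single (-1 : ℤ) (1 : ℂ))))⁻¹
      ≤ (‖z‖₊ : ℝ≥0∞) ∧
    (‖z‖₊ : ℝ≥0∞) ≤ spectralRadius ℂ (Mop (AddMonoidAlgebra.single (1 : ℤ) (1 : ℂ)))}
  set μ : ℂ → ℂ := fun z => limUnder atTop fun n => (φ n).coeff.sum fun m c => c * z ^ m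
  have hMop : Tendsto (fun n => Mop (φ n)) atTop (nhds M) :=
    tendsto_iff_norm_sub_tendsto_zero.mpr hconv
  have hσU : spectrum ℂ (Mop (AddMonoidAlgebra.single (1 : ℤ) (1 : ℂ))) ⊆ U := fun z hz =>
    ⟨spectrum.inv_spectralRadius_inv_le_nnnorm
      (u := Units.map Mop.toMonoidHom (unitOfInvertible (LaurentPolynomial.T 1))) hz,
      le_iSup₂ (α := ℝ≥0∞) z hz⟩
  have hμ : TendstoUniformlyOn (fun n z => (φ n).coeff.sum fun m c => c * z ^ m) μ atTop U := by
    refine UniformCauchySeqOn.tendstoUniformlyOn_limUnder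
      (.of_dist_le hMop.cauchySeq fun m n z hz => ?_)
    rw [dist_eq_norm, dist_eq_norm, ← map_sub, ← Finsupp.sum_sub_index (fun _ _ _ => sub_mul _ _ _),
      ← AddMonoidAlgebra.coeff_sub]
    exact hbound _ z hz.1 hz.2
  refine ⟨μ, hμ, ?_, spectrum.subset_closure_image_of_tendsto hMop
    (fun n => Mop.commute_of_mem_topologicalClosure_range (φ n) hMmem) (fun n => ?_) (hμ.mono hσU)⟩
  · let χ : LaurentPolynomial ℂ →ₐ[ℂ] ℂ := (WeakDual.CharacterSpace.toAlgHom γ).comp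
      (Mop.codRestrict _ fun ψ => Mop.range.le_topologicalClosure (Mop.mem_range_self ψ))
    have hχ : Tendsto (fun n => χ (φ n)) atTop (nhds (γ ⟨M, hMmem⟩)) :=
      ((map_continuous γ).tendsto _).comp (tendsto_subtype_rng.mpr hMop)
    rw [hαγ]
    exact (hχ.congr fun n => LaurentPolynomial.algHom_apply_eq_sum χ (φ n)).limUnder_eq.symm
  · nontriviality (E →L[ℂ] E)
    exact LaurentPolynomial.spectrum_algHom_subset Mop (spectrum.nonempty _) (φ n)

/-- If `M = lim M_{φₙ}` in operator norm with `φₙ ∈ F(ℤ)`, and `α = γ(M)` for a character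
`γ` on the closed algebra `𝔖` generated by the convolution operators, then the symbols
`M̃_{φₙ}` converge uniformly on `U_E` to a function `μ_M`, `γ(M) = μ_M(γ(S))`, and
consequently `σ(M) ⊆ closure (μ_M(σ(S)))`. -/
theorem spectrum_subset_closure_symbol {E : Type*} [NormedAddCommGroup E] [NormedSpace ℂ E]
    [CompleteSpace E]
    (Mop : AddMonoidAlgebra ℂ ℤ →ₐ[ℂ] (E →L[ℂ] E))
    (hbound : ∀ (ψ : AddMonoidAlgebra ℂ ℤ) (z : ℂ),
      (spectralRadius ℂ (Mop (AddMonoidAlgebra.single (-1 : ℤ) (1 : ℂ))))⁻¹ ≤ (‖z‖₊ : ℝ≥0∞) →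
      (‖z‖₊ : ℝ≥0∞) ≤ spectralRadius ℂ (Mop (AddMonoidAlgebra.single (1 : ℤ) (1 : ℂ))) →
      ‖ψ.coeff.sum fun n c => c * z ^ n‖ ≤ ‖Mop ψ‖)
    (M : E →L[ℂ] E) (φ : ℕ → AddMonoidAlgebra ℂ ℤ)
    (hconv : Tendsto (fun n => ‖Mop (φ n) - M‖) atTop (nhds 0))
    (hMmem : M ∈ Mop.range.topologicalClosure)
    (hchar : ∀ β ∈ spectrum ℂ M,
      ∃ δ : WeakDual.characterSpace ℂ Mop.range.topologicalClosure, β = δ ⟨M, hMmem⟩)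
    (γ : WeakDual.characterSpace ℂ Mop.range.topologicalClosure)
    (α : ℂ) (hαM : α ∈ spectrum ℂ M) (hαγ : α = γ ⟨M, hMmem⟩) :
    ∃ μ : ℂ → ℂ,
      TendstoUniformlyOn (fun n z => (φ n).coeff.sum fun m c => c * z ^ m) μ atTop
        {z : ℂ | (spectralRadius ℂ (Mop (AddMonoidAlgebra.single (-1 : ℤ) (1 : ℂ))))⁻¹
            ≤ (‖z‖₊ : ℝ≥0∞) ∧
          (‖z‖₊ : ℝ≥0∞) ≤ spectralRadius ℂ (Mop (AddMonoidAlgebra.single (1 : ℤ) (1 : ℂ)))} ∧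
      α = μ (γ ⟨Mop (AddMonoidAlgebra.single (1 : ℤ) (1 : ℂ)),
        Mop.range.le_topologicalClosure (AlgHom.mem_range_self _ _)⟩) ∧
      spectrum ℂ M ⊆
        closure (μ '' spectrum ℂ (Mop (AddMonoidAlgebra.single (1 : ℤ) (1 : ℂ)))) :=
  spectrum_subset_closure_symbol_general Mop hbound M φ hconv hMmem γ α hαγ
end

section
/- Let T be a bounded linear operator on a Hilbert space (or Banach space) such that 0 is in the residual spectrum of 𝐒 (so 𝐒* has an eigenvector g ≠ 0 with 𝐒*g = 0). If 0 < |z| < 1/ρ(𝐒) and (𝐒_{-1})* - zI is surjective, then there exists f ≠ 0 with ((1/z)I - 𝐒*)f = 0, contradicting 1/|z| > ρ(𝐒*) = ρ(𝐒); hence z ∈ σ((𝐒_{-1})*) and therefore z̄-type duality gives z ∈ σ(𝐒_{-1}). -/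
open scoped ENNReal

/-!
A preimage `f` of `g` under `(𝐒₋₁)* - z` is an eigenvector of `𝐒*` for `z⁻¹`, because
`𝐒₋₁ 𝐒 = I` and `g ∘ 𝐒 = 0`. A nonzero functional with `f ∘ T = c • f` annihilates the range of
`c - T`, so `c ∈ σ(T)`; for `T = 𝐒` this would give `1/|z| ≤ ρ(𝐒)`. Finally, `(𝐒₋₁)* - z` is,
up to sign, precomposition with `z - 𝐒₋₁`, so it is onto whenever `z ∉ σ(𝐒₋₁)`.
-/

namespace StrongDual

variable {𝕜 E : Type*} [NontriviallyNormedField 𝕜] [NormedAddCommGroup E] [NormedSpace 𝕜 E]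

theorem comp_algebraMap_sub (f : StrongDual 𝕜 E) (T : E →L[𝕜] E) (c : 𝕜) :
    f.comp (algebraMap 𝕜 (E →L[𝕜] E) c - T) = c • f - f.comp T := by
  ext x
  simp [Algebra.algebraMap_eq_smul_one]

theorem surjective_comp_sub_smul_of_notMem_spectrum {T : E →L[𝕜] E} {c : 𝕜}
    (hc : c ∉ spectrum 𝕜 T) :
    Function.Surjective fun f : StrongDual 𝕜 E => f.comp T - c • f := by
  obtain ⟨u, hu⟩ := spectrum.notMem_iff.mp hc
  intro h
  refine ⟨-h.comp (↑u⁻¹ : E →L[𝕜] E), ?_⟩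
  dsimp only
  rw [← neg_sub, ← comp_algebraMap_sub, ← hu, ContinuousLinearMap.neg_comp,
    ContinuousLinearMap.comp_assoc, ← ContinuousLinearMap.mul_def, Units.inv_mul, neg_neg]
  rfl

theorem mem_spectrum_of_comp_eq_smul {f : StrongDual 𝕜 E} {T : E →L[𝕜] E} {c : 𝕜}
    (hf : f ≠ 0) (hfT : f.comp T = c • f) : c ∈ spectrum 𝕜 T := by
  intro hc
  obtain ⟨u, hu⟩ := hc
  have hfu : f.comp (u : E →L[𝕜] E) = 0 := by rw [hu, comp_algebraMap_sub, hfT, sub_self]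
  apply hf
  calc f = (f.comp (u : E →L[𝕜] E)).comp (↑u⁻¹ : E →L[𝕜] E) := by
        rw [ContinuousLinearMap.comp_assoc, ← ContinuousLinearMap.mul_def, Units.mul_inv]; rfl
    _ = 0 := by rw [hfu, ContinuousLinearMap.zero_comp]

theorem comp_eq_inv_smul_of_comp_sub_smul_eq {S Sm : E →L[𝕜] E} (hid : ∀ x, Sm (S x) = x)
    {f g : StrongDual 𝕜 E} (hgS : ∀ x, g (S x) = 0) {z : 𝕜} (hz : z ≠ 0)
    (hf : f.comp Sm - z • f = g) : f.comp S = z⁻¹ • f := by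
  ext x
  have hSx := congr($hf (S x))
  simp only [sub_apply, ContinuousLinearMap.comp_apply, hid, smul_apply, smul_eq_mul,
    hgS] at hSx
  simp only [ContinuousLinearMap.comp_apply, smul_apply, smul_eq_mul]
  field_simp
  linear_combination -hSx

end StrongDual

open StrongDual in
theorem backward_shift_spectrum_small_z_general {E : Type*} [NormedAddCommGroup E] [NormedSpace ℂ E]
    (S Sm : E →L[ℂ] E) (hid : ∀ x : E, Sm (S x) = x)
    (g : StrongDual ℂ E) (hg : g ≠ 0) (hSg : ∀ x : E, g (S x) = 0)
    (z : ℂ) (hz0 : 0 < ‖z‖) (hz1 : (‖z‖₊ : ℝ≥0∞) < (spectralRadius ℂ S)⁻¹) :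
    (Function.Surjective (fun f : StrongDual ℂ E => f.comp Sm - z • f) →
      ∃ f : StrongDual ℂ E, f ≠ 0 ∧ ∀ x : E, f (S x) = (1 / z) * f x) ∧
    z ∈ spectrum ℂ Sm := by
  have hz : z ≠ 0 := norm_pos_iff.mp hz0
  have exists_eigenvector
      (hsurj : Function.Surjective fun f : StrongDual ℂ E => f.comp Sm - z • f) :
      ∃ f : StrongDual ℂ E, f ≠ 0 ∧ f.comp S = z⁻¹ • f := by
    obtain ⟨f, hf⟩ := hsurj g
    refine ⟨f, ?_, comp_eq_inv_smul_of_comp_sub_smul_eq hid hSg hz hf⟩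
    rintro rfl
    apply hg
    rw [← hf]
    ext
    simp
  refine ⟨fun hsurj => ?_, ?_⟩
  · obtain ⟨f, hf0, hf⟩ := exists_eigenvector hsurj
    exact ⟨f, hf0, fun x => by simpa [one_div] using congr($hf x)⟩
  · by_contra hzσ
    obtain ⟨f, hf0, hf⟩ := exists_eigenvector (surjective_comp_sub_smul_of_notMem_spectrum hzσ)
    refine mem_spectrum_of_comp_eq_smul hf0 hf (spectrum.mem_resolventSet_of_spectralRadius_lt ?_)
    rwa [nnnorm_inv, ENNReal.coe_inv (nnnorm_ne_zero_iff.mpr hz), ENNReal.lt_inv_iff_lt_inv]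

/-- Suppose `𝐒₋₁𝐒 = I`, `0` is in the residual spectrum of `𝐒` (so `𝐒*` has an eigenvector
`g ≠ 0` with `𝐒*g = 0`), and `0 < |z| < 1/ρ(𝐒)`. If `(𝐒₋₁)* - zI` is surjective, then there
exists `f ≠ 0` with `((1/z)I - 𝐒*)f = 0` (a contradiction with `1/|z| > ρ(𝐒)`); hence
`z ∈ σ(𝐒₋₁)`. -/
theorem backward_shift_spectrum_small_z {E : Type*} [NormedAddCommGroup E] [NormedSpace ℂ E]
    [CompleteSpace E] (S Sm : E →L[ℂ] E) (hid : ∀ x : E, Sm (S x) = x)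
    (g : StrongDual ℂ E) (hg : g ≠ 0) (hSg : ∀ x : E, g (S x) = 0)
    (z : ℂ) (hz0 : 0 < ‖z‖) (hz1 : (‖z‖₊ : ℝ≥0∞) < (spectralRadius ℂ S)⁻¹) :
    (Function.Surjective (fun f : StrongDual ℂ E => f.comp Sm - z • f) →
      ∃ f : StrongDual ℂ E, f ≠ 0 ∧ ∀ x : E, f (S x) = (1 / z) * f x) ∧
    z ∈ spectrum ℂ Sm :=
  backward_shift_spectrum_small_z_general S Sm hid g hg hSg z hz0 hz1
end

section
/- Let 𝐒 and 𝐒_{-1} be bounded on 𝐄 with 𝐒_{-1}𝐒 = I. Then σ(𝐒_{-1}) = { z ∈ ℂ : |z| ≤ ρ(𝐒_{-1}) }, i.e. the spectrum of the backward shift 𝐒_{-1} is the full closed disk of radius ρ(𝐒_{-1}), given that the annulus { 1/ρ(𝐒) ≤ |z| ≤ ρ(𝐒_{-1}) } is contained in σ(𝐒_{-1}). -/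
/-!
From `Sm * S = 1` we get `(z - Sm) * S = -(1 - z • S)`, and for `‖z‖ < ρ(S)⁻¹` the right-hand
side is invertible (`z⁻¹` lies outside the spectrum of `S`). So if `z - Sm` were invertible,
`S` would be too, which is impossible because a nonzero functional vanishes on its range.
Hence the open disk of radius `ρ(S)⁻¹` lies in `σ(Sm)`, and the annulus fills the rest of the
closed disk of radius `ρ(Sm)`.
-/

open scoped ENNReal

theorem ContinuousLinearMap.not_isUnit_of_comp_eq_zero {R M N : Type*} [Semiring R]
    [TopologicalSpace M] [AddCommMonoid M] [Module R M] [TopologicalSpace N] [AddCommMonoid N]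
    [Module R N] {f : M →L[R] M} {g : M →L[R] N} (hg : g ≠ 0) (hgf : g.comp f = 0) :
    ¬IsUnit f := by
  rintro ⟨u, rfl⟩
  apply hg
  calc g = (g.comp (u : M →L[R] M)).comp (↑u⁻¹ : M →L[R] M) := by
        rw [comp_assoc, ← mul_def, u.mul_inv, one_def, comp_id]
    _ = 0 := by rw [hgf, zero_comp]

namespace spectrum

variable {𝕜 A : Type*} [NontriviallyNormedField 𝕜] [NormedRing A] [NormedAlgebra 𝕜 A]

theorem mem_of_mul_eq_one_of_lt_inv_radius {a b : A} (hab : a * b = 1) (hb : ¬IsUnit b)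
    {z : 𝕜} (hz : ‖z‖₊ < (spectralRadius 𝕜 b)⁻¹) : z ∈ spectrum 𝕜 a := by
  rw [mem_iff]
  intro hza
  have key : (algebraMap 𝕜 A z - a) * b = -(1 - z • b) := by
    rw [sub_mul, hab, Algebra.algebraMap_eq_smul_one, smul_one_mul, neg_sub]
  have hunit : IsUnit (-(1 - z • b)) := (isUnit_one_sub_smul_of_lt_inv_radius hz).neg
  exact hb ((Units.isUnit_units_mul hza.unit b).1 (key ▸ hunit))

theorem eq_closedDisk_of_mul_eq_one {a b : A} (hab : a * b = 1) (hb : ¬IsUnit b)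
    (hann : {z : 𝕜 | (spectralRadius 𝕜 b)⁻¹ ≤ (‖z‖₊ : ℝ≥0∞) ∧
        (‖z‖₊ : ℝ≥0∞) ≤ spectralRadius 𝕜 a} ⊆ spectrum 𝕜 a) :
    spectrum 𝕜 a = {z : 𝕜 | (‖z‖₊ : ℝ≥0∞) ≤ spectralRadius 𝕜 a} := by
  refine Set.Subset.antisymm (fun z hz => not_lt.1 fun h =>
    hz (mem_resolventSet_of_spectralRadius_lt h)) fun z hz => ?_
  rcases lt_or_ge (‖z‖₊ : ℝ≥0∞) (spectralRadius 𝕜 b)⁻¹ with hsmall | hlarge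
  · exact mem_of_mul_eq_one_of_lt_inv_radius hab hb hsmall
  · exact hann ⟨hlarge, hz⟩

end spectrum

theorem spectrum_backward_shift_eq_disk_general {E : Type*} [NormedAddCommGroup E] [NormedSpace ℂ E]
    (S Sm : E →L[ℂ] E) (hid : ∀ x : E, Sm (S x) = x)
    (hg : ∃ g : StrongDual ℂ E, g ≠ 0 ∧ ∀ x : E, g (S x) = 0)
    (hann : {z : ℂ | (spectralRadius ℂ S)⁻¹ ≤ (‖z‖₊ : ℝ≥0∞) ∧
        (‖z‖₊ : ℝ≥0∞) ≤ spectralRadius ℂ Sm} ⊆ spectrum ℂ Sm) :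
    spectrum ℂ Sm = {z : ℂ | (‖z‖₊ : ℝ≥0∞) ≤ spectralRadius ℂ Sm} := by
  obtain ⟨g, hg0, hgS⟩ := hg
  have hS : ¬IsUnit S :=
    ContinuousLinearMap.not_isUnit_of_comp_eq_zero hg0 (ContinuousLinearMap.ext hgS)
  exact spectrum.eq_closedDisk_of_mul_eq_one (ContinuousLinearMap.ext hid) hS hann

/-- If `𝐒` and `𝐒₋₁` are bounded on `𝐄` with `𝐒₋₁𝐒 = I`, `0` is an eigenvalue of `𝐒*`
(arising from `0` in the residual spectrum of `𝐒`), and the annulus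
`{1/ρ(𝐒) ≤ |z| ≤ ρ(𝐒₋₁)}` is contained in `σ(𝐒₋₁)`, then `σ(𝐒₋₁)` is the full closed
disk of radius `ρ(𝐒₋₁)`. -/
theorem spectrum_backward_shift_eq_disk {E : Type*} [NormedAddCommGroup E] [NormedSpace ℂ E]
    [CompleteSpace E] (S Sm : E →L[ℂ] E) (hid : ∀ x : E, Sm (S x) = x)
    (hg : ∃ g : StrongDual ℂ E, g ≠ 0 ∧ ∀ x : E, g (S x) = 0)
    (hann : {z : ℂ | (spectralRadius ℂ S)⁻¹ ≤ (‖z‖₊ : ℝ≥0∞) ∧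
        (‖z‖₊ : ℝ≥0∞) ≤ spectralRadius ℂ Sm} ⊆ spectrum ℂ Sm) :
    spectrum ℂ Sm = {z : ℂ | (‖z‖₊ : ℝ≥0∞) ≤ spectralRadius ℂ Sm} :=
  spectrum_backward_shift_eq_disk_general S Sm hid hg hann
end
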